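/- arXiv:1601.02792 — 2 statements merged into one kernel-verified Lean document; each statement's English description precedes it below -/
import Mathlib

section
/- Let X be a simplicial complex on a vertex set V, and let a_1, a_2 ∈ V be vertices such that whenever {a_1} ∪ G and {a_2} ∪ G are both faces of X (for G ⊆ V \ {a_1,a_2}), then {a_1, a_2} ∪ G is also a face of X. Let V_0 = V \ {a_1, a_2}, let a be a new vertex, and let Y be the simplicial complex on W = V_0 ∪ {a} such that (i) the restrictions X|_{V_0} and Y|_{V_0} coincide, and (ii) for G ⊆ V_0, the set G ∪ {a} is a face of Y if and only if G ∪ {a_1} or G ∪ {a_2} is a face of X. Then X and Y are homotopy equivalent (i.e., their geometric realizations are homotopy equivalent topological spaces). -/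
/-!
Common infrastructure: abstract simplicial complexes, geometric realization,
homotopy equivalence, reduced simplicial cohomology, squarefree monomial ideals
(encoded as upward closed families of finite sets), Koszul-complex multigraded
Betti numbers, and letterplace ideals of posets.
-/

noncomputable section

open Finset

attribute [local instance] Classical.propDecidable

universe u v w

/-- An abstract simplicial complex on the vertex type `V`: a collection of
finite subsets of `V` (the faces) closed under taking subsets. -/
structure SComplex (V : Type u) where
  faces : Set (Finset V)
  down_closed : ∀ {F G : Finset V}, F ∈ faces → G ⊆ F → G ∈ faces

namespace SComplex

/-- The geometric realization of a simplicial complex: the subspace of `V → ℝ`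
consisting of the convex weight functions supported on a face. -/
def realization {V : Type u} [Fintype V] (X : SComplex V) : Set (V → ℝ) :=
  {f | (∀ v, 0 ≤ f v) ∧ (∑ v, f v) = 1 ∧ ∃ F ∈ X.faces, ∀ v, f v ≠ 0 → v ∈ F}

/-- Two simplicial complexes are homotopy equivalent if their geometric
realizations are homotopy equivalent topological spaces. -/
def HEquiv {V : Type u} {W : Type v} [Fintype V] [Fintype W]
    (X : SComplex V) (Y : SComplex W) : Prop :=
  Nonempty (ContinuousMap.HomotopyEquiv X.realization Y.realization)

/-- Isomorphism ("equality up to relabeling of vertices") of simplicial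
complexes: an order isomorphism between the face posets. -/
def IsIsomorphic {V : Type u} {W : Type v} (X : SComplex V) (Y : SComplex W) : Prop :=
  Nonempty ({F : Finset V // F ∈ X.faces} ≃o {G : Finset W // G ∈ Y.faces})

/-- The induced subcomplex on a subset `S` of the vertex set. -/
def restrict {V : Type u} (X : SComplex V) (S : Set V) : SComplex V where
  faces := {F | F ∈ X.faces ∧ ∀ v ∈ F, v ∈ S}
  down_closed := by
    intro F G hF hGF
    exact ⟨X.down_closed hF.1 hGF, fun v hv => hF.2 v (hGF hv)⟩

/-- The join of two simplicial complexes (on the disjoint union of the two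
vertex types). -/
def join {V : Type u} {W : Type v} (X : SComplex V) (Y : SComplex W) :
    SComplex (V ⊕ W) where
  faces := {F | F.preimage Sum.inl Sum.inl_injective.injOn ∈ X.faces ∧
                F.preimage Sum.inr Sum.inr_injective.injOn ∈ Y.faces}
  down_closed := by
    intro F G hF hGF
    constructor
    · exact X.down_closed hF.1 fun x hx => by
        simp only [Finset.mem_preimage] at hx ⊢
        exact hGF hx
    · exact Y.down_closed hF.2 fun x hx => by
        simp only [Finset.mem_preimage] at hx ⊢
        exact hGF hx

/-- The join of a finite family of simplicial complexes on pairwise disjoint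
vertex types. -/
def bigJoin {ι : Type u} {V : ι → Type v} (X : ∀ i, SComplex (V i)) :
    SComplex (Σ i, V i) where
  faces := {F | ∀ i, F.preimage (Sigma.mk i) sigma_mk_injective.injOn ∈ (X i).faces}
  down_closed := by
    intro F G hF hGF i
    exact (X i).down_closed (hF i) fun x hx => by
      simp only [Finset.mem_preimage] at hx ⊢
      exact hGF hx

/-- The simplicial complex consisting of two disjoint points. -/
def twoPoint : SComplex Bool where
  faces := {F | F.card ≤ 1}
  down_closed := by
    intro F G hF hGF
    exact le_trans (Finset.card_le_card hGF) hF

/-- The suspension of a simplicial complex: its join with two points. -/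
def suspension {V : Type u} (X : SComplex V) : SComplex (V ⊕ Bool) :=
  join X twoPoint

/-- Vertex type of the `m`-fold iterated suspension. -/
def SuspType (V : Type u) : ℕ → Type u
  | 0 => V
  | m + 1 => SuspType V m ⊕ Bool

/-- The `m`-fold iterated suspension of a simplicial complex. -/
def iterSusp {V : Type u} (X : SComplex V) : (m : ℕ) → SComplex (SuspType V m)
  | 0 => X
  | m + 1 => suspension (iterSusp X m)

end SComplex

/-- Position of `x` with respect to a finite set: the number of elements of `F`
preceding `x` in a fixed well-ordering of the vertex type.  Used for the signs
in (co)chain complexes. -/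
def vpos {V : Type u} (F : Finset V) (x : V) : ℕ :=
  (F.filter fun w => WellOrderingRel w x).card

namespace SComplex

variable (k : Type w) [Field k]

/-- The faces of dimension `i` (i.e. of cardinality `i + 1`), `i ∈ ℤ`. -/
abbrev Face {V : Type u} (X : SComplex V) (i : ℤ) : Type u :=
  {F : Finset V // F ∈ X.faces ∧ (F.card : ℤ) = i + 1}

/-- Reduced simplicial `i`-cochains of `X` with coefficients in `k`
(the empty face in dimension `-1` is included). -/
abbrev cochain {V : Type u} (X : SComplex V) (i : ℤ) : Type (max u w) :=
  Face X i → k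

/-- Evaluation of a cochain on an arbitrary finite set (zero if the set is not
a face of the appropriate dimension). -/
def evalC {V : Type u} {X : SComplex V} {i : ℤ} (f : cochain k X i) (F : Finset V) : k :=
  if h : F ∈ X.faces ∧ (F.card : ℤ) = i + 1 then f ⟨F, h⟩ else 0

theorem evalC_add {V : Type u} {X : SComplex V} {i : ℤ} (f g : cochain k X i)
    (F : Finset V) : evalC k (f + g) F = evalC k f F + evalC k g F := by
  unfold evalC
  split_ifs <;> simp

theorem evalC_smul {V : Type u} {X : SComplex V} {i : ℤ} (s : k) (f : cochain k X i)
    (F : Finset V) : evalC k (s • f) F = s * evalC k f F := by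
  unfold evalC
  split_ifs <;> simp

/-- The simplicial coboundary map on reduced cochains. -/
def coboundary {V : Type u} (X : SComplex V) (i : ℤ) :
    cochain k X i →ₗ[k] cochain k X (i + 1) where
  toFun f F := ∑ v ∈ F.1, ((-1 : k) ^ vpos F.1 v) * evalC k f (F.1.erase v)
  map_add' f g := by
    funext F
    show (∑ v ∈ F.1, ((-1 : k) ^ vpos F.1 v) * evalC k (f + g) (F.1.erase v))
      = (∑ v ∈ F.1, ((-1 : k) ^ vpos F.1 v) * evalC k f (F.1.erase v))
      + (∑ v ∈ F.1, ((-1 : k) ^ vpos F.1 v) * evalC k g (F.1.erase v))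
    rw [← Finset.sum_add_distrib]
    exact Finset.sum_congr rfl fun v _ => by rw [evalC_add, mul_add]
  map_smul' s f := by
    funext F
    show (∑ v ∈ F.1, ((-1 : k) ^ vpos F.1 v) * evalC k (s • f) (F.1.erase v))
      = s * ∑ v ∈ F.1, ((-1 : k) ^ vpos F.1 v) * evalC k f (F.1.erase v)
    rw [Finset.mul_sum]
    exact Finset.sum_congr rfl fun v _ => by rw [evalC_smul]; ring

/-- The dimension of the `i`-th reduced simplicial cohomology of `X` with
coefficients in the field `k` (computed as `dim ker d^i - dim im d^(i-1)`). -/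
def redCohomDim {V : Type u} (X : SComplex V) (i : ℤ) : ℕ :=
  Module.finrank k (LinearMap.ker (coboundary k X i)) -
    Module.finrank k (LinearMap.range (coboundary k X (i - 1)))

/-- The generating series `t·H̃(X,t) = ∑_{i ≥ -1} t^{i+1} dim_k H̃^i(X;k)`,
an element of `ℕ⟦t⟧`. -/
def hSeries {V : Type u} (X : SComplex V) : PowerSeries ℕ :=
  PowerSeries.mk fun m => redCohomDim k X ((m : ℤ) - 1)

end SComplex

/-- A squarefree monomial ideal on the set of variables `W`, encoded by the
upward closed family of the supports of the squarefree monomials belonging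
to it. -/
structure SqfIdeal (W : Type u) where
  carrier : Set (Finset W)
  up_closed : ∀ {S T : Finset W}, S ∈ carrier → S ⊆ T → T ∈ carrier

namespace SqfIdeal

/-- The basis of the degree-`R` strand of the Koszul complex `K(x;I)` in
homological degree `i`. -/
abbrev KBasis {W : Type u} (I : SqfIdeal W) (R : Finset W) (i : ℤ) : Type u :=
  {S : Finset W // S ⊆ R ∧ (S.card : ℤ) = i ∧ R \ S ∈ I.carrier}

/-- The degree-`R` strand of the Koszul complex of `I`, in homological
degree `i`, with coefficients in `k`. -/
abbrev kchain (k : Type w) [Field k] {W : Type u} (I : SqfIdeal W) (R : Finset W)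
    (i : ℤ) : Type (max u w) :=
  KBasis I R i → k

variable (k : Type w) [Field k]

/-- Evaluation of a Koszul chain on an arbitrary finite set. -/
def evalK {W : Type u} {I : SqfIdeal W} {R : Finset W} {i : ℤ}
    (f : kchain k I R i) (S : Finset W) : k :=
  if h : S ⊆ R ∧ (S.card : ℤ) = i ∧ R \ S ∈ I.carrier then f ⟨S, h⟩ else 0

theorem evalK_add {W : Type u} {I : SqfIdeal W} {R : Finset W} {i : ℤ}
    (f g : kchain k I R i) (S : Finset W) :
    evalK k (f + g) S = evalK k f S + evalK k g S := by
  unfold evalK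
  split_ifs <;> simp

theorem evalK_smul {W : Type u} {I : SqfIdeal W} {R : Finset W} {i : ℤ}
    (s : k) (f : kchain k I R i) (S : Finset W) :
    evalK k (s • f) S = s * evalK k f S := by
  unfold evalK
  split_ifs <;> simp

/-- The Koszul differential on the degree-`R` strand (as a map of the dual
function spaces). -/
def koszulD {W : Type u} (I : SqfIdeal W) (R : Finset W) (i : ℤ) :
    kchain k I R i →ₗ[k] kchain k I R (i - 1) where
  toFun f S := ∑ v ∈ R \ S.1, ((-1 : k) ^ vpos S.1 v) * evalK k f (insert v S.1)
  map_add' f g := by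
    funext S
    show (∑ v ∈ R \ S.1, ((-1 : k) ^ vpos S.1 v) * evalK k (f + g) (insert v S.1))
      = (∑ v ∈ R \ S.1, ((-1 : k) ^ vpos S.1 v) * evalK k f (insert v S.1))
      + (∑ v ∈ R \ S.1, ((-1 : k) ^ vpos S.1 v) * evalK k g (insert v S.1))
    rw [← Finset.sum_add_distrib]
    exact Finset.sum_congr rfl fun v _ => by rw [evalK_add, mul_add]
  map_smul' s f := by
    funext S
    show (∑ v ∈ R \ S.1, ((-1 : k) ^ vpos S.1 v) * evalK k (s • f) (insert v S.1))
      = s * ∑ v ∈ R \ S.1, ((-1 : k) ^ vpos S.1 v) * evalK k f (insert v S.1)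
    rw [Finset.mul_sum]
    exact Finset.sum_congr rfl fun v _ => by rw [evalK_smul]; ring

end SqfIdeal

/-- The multigraded Betti number `β_{i,R}(I) = dim_k Tor_i(I,k)_R` of a
squarefree monomial ideal in the squarefree multidegree `R`, computed as the
dimension of the `i`-th homology of the degree-`R` strand of the Koszul
complex. -/
def multiBetti (k : Type w) [Field k] {W : Type u} (I : SqfIdeal W) (i : ℤ)
    (R : Finset W) : ℕ :=
  Module.finrank k (LinearMap.ker (SqfIdeal.koszulD k I R i)) -
    Module.finrank k (LinearMap.range (SqfIdeal.koszulD k I R (i + 1)))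

/-- The graded Betti number `β_{i,j}(I) = dim_k Tor_i(I,k)_j` of a squarefree
monomial ideal: the sum of the multigraded Betti numbers over the (squarefree)
multidegrees of cardinality `j`. -/
def gradedBetti (k : Type w) [Field k] {W : Type u} [Fintype W] (I : SqfIdeal W)
    (i : ℤ) (j : ℤ) : ℕ :=
  if 0 ≤ j then
    ∑ R ∈ Finset.powersetCard j.toNat (Finset.univ : Finset W), multiBetti k I i R
  else 0

/-- The `n`-th letterplace ideal `L(n,P)` of a poset `P`: the squarefree
monomial ideal on the variables `x_{(i,p)}`, `(i,p) ∈ [n] × P`, generated by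
the monomials `x_{(1,p₁)} ⋯ x_{(n,pₙ)}` with `p₁ ≤ p₂ ≤ ⋯ ≤ pₙ` in `P`. -/
def letterplace (n : ℕ) (P : Type u) [PartialOrder P] : SqfIdeal (Fin n × P) where
  carrier := {T | ∃ c : Fin n → P, Monotone c ∧ ∀ i, (i, c i) ∈ T}
  up_closed := by
    rintro S T ⟨c, hc, hm⟩ hST
    exact ⟨c, hc, fun i => hST (hm i)⟩

/-- The `i`-th part `R_i ⊆ P` of a multidegree `R ⊆ [n] × P`. -/
def part {n : ℕ} {P : Type u} (R : Finset (Fin n × P)) (i : Fin n) : Finset P :=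
  (R.filter fun q => q.1 = i).image Prod.snd

/-- The set of maximal elements of the induced subposet on `A`. -/
def maxSet {P : Type u} [PartialOrder P] (A : Finset P) : Finset P :=
  A.filter fun a => ∀ b ∈ A, a ≤ b → a = b

/-- The set of minimal elements of the induced subposet on `A`. -/
def minSet {P : Type u} [PartialOrder P] (A : Finset P) : Finset P :=
  A.filter fun a => ∀ b ∈ A, b ≤ a → a = b

/-- The transitive order `A ≤ B` on subsets of a poset: every maximal element
of `A` is below some minimal element of `B`, and every minimal element of `B`
is above some maximal element of `A`. -/
def subsetLE {P : Type u} [PartialOrder P] (A B : Finset P) : Prop :=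
  (∀ a ∈ maxSet A, ∃ b ∈ minSet B, a ≤ b) ∧
  (∀ b ∈ minSet B, ∃ a ∈ maxSet A, a ≤ b)

/-- The independence complex of the bipartite graph on two disjoint copies of
`P`, with left vertex set `A`, right vertex set `B`, and edges the pairs
`(p, q) ∈ A × B` with `p ≤ q` in `P`. -/
def XComplex {P : Type u} [PartialOrder P] (A B : Finset P) : SComplex (P ⊕ P) where
  faces := {F | (∀ x ∈ F, Sum.elim (· ∈ A) (· ∈ B) x) ∧
                ∀ p q : P, Sum.inl p ∈ F → Sum.inr q ∈ F → ¬ p ≤ q}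
  down_closed := by
    intro F G hF hGF
    exact ⟨fun x hx => hF.1 x (hGF hx), fun p q hp hq => hF.2 p q (hGF hp) (hGF hq)⟩

/-- `Y₁`: the simplicial complex on `A` whose faces are the subsets `F ⊆ A`
such that some `b ∈ B` dominates no element of `F`. -/
def Y1Complex {P : Type u} [PartialOrder P] (A B : Finset P) : SComplex P where
  faces := {F | (∀ x ∈ F, x ∈ A) ∧ ∃ b ∈ B, ∀ a ∈ F, ¬ a ≤ b}
  down_closed := by
    rintro F G ⟨hFA, b, hb, hFb⟩ hGF
    exact ⟨fun x hx => hFA x (hGF hx), b, hb, fun a ha => hFb a (hGF ha)⟩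

/-- `Y₂`: the simplicial complex on `B` whose faces are the subsets `F ⊆ B`
such that some `a ∈ A` is dominated by no element of `F`. -/
def Y2Complex {P : Type u} [PartialOrder P] (A B : Finset P) : SComplex P where
  faces := {F | (∀ x ∈ F, x ∈ B) ∧ ∃ a ∈ A, ∀ b ∈ F, ¬ a ≤ b}
  down_closed := by
    rintro F G ⟨hFB, a, ha, hFa⟩ hGF
    exact ⟨fun x hx => hFB x (hGF hx), a, ha, fun b hb => hFa b (hGF hb)⟩

/-- The restriction `Δ(n,P)|_R` of the Stanley–Reisner complex of the
letterplace ideal `L(n,P)` to the vertex set `R`. -/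
def deltaRes (n : ℕ) (P : Type u) [PartialOrder P] (R : Finset (Fin n × P)) :
    SComplex (Fin n × P) where
  faces := {F | F ⊆ R ∧ ¬ ∃ c : Fin n → P, Monotone c ∧ ∀ i, (i, c i) ∈ F}
  down_closed := by
    rintro F G ⟨hFR, hF⟩ hGF
    exact ⟨hGF.trans hFR, fun ⟨c, hc, hm⟩ => hF ⟨c, hc, fun i => hGF (hm i)⟩⟩

/-- `A` is a maximal antichain of the poset `P`. -/
def IsMaxAntichain' {P : Type u} [PartialOrder P] (A : Finset P) : Prop :=
  IsAntichain (· ≤ ·) (A : Set P) ∧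
    ∀ B : Finset P, IsAntichain (· ≤ ·) (B : Set P) → A ⊆ B → A = B

/-- The maximal cardinality of an antichain in the finite poset `P`. -/
def maxAntichainCard (P : Type u) [PartialOrder P] [Fintype P] : ℕ :=
  Finset.sup (Finset.univ.filter fun A : Finset P => IsAntichain (· ≤ ·) (A : Set P))
    Finset.card

/-- The independence complex of a bipartite graph, with parts `A` and `B` and
edge relation `E`. -/
def bipIndep {A : Type u} {B : Type v} (E : A → B → Prop) : SComplex (A ⊕ B) where
  faces := {F | ∀ a b, Sum.inl a ∈ F → Sum.inr b ∈ F → ¬ E a b}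
  down_closed := by
    intro F G hF hGF a b ha hb
    exact hF a b (hGF ha) (hGF hb)


/-!
Put `X' = X ∪ (a₁ ∗ st_X a₂)`. The faces of `X'` outside `X` are matched by adding and removing
`a₂` (the hypothesis on `X` guarantees that removing `a₂` from such a face never lands in `X`),
so `X'` collapses onto `X`. In `X'` every face containing `a₂` still spans a face together with
`a₁`, so sliding the weight of `a₂` onto `a₁` deformation retracts `|X'|` onto `|X'|_{V ∖ {a₂}}|`,
and this restriction is `Y`, with `a₁` playing the role of the new vertex `a`.
-/

open scoped ContinuousMap

theorem Finset.eq_or_eq_insert_of_subset_of_subset_insert {α : Type*} [DecidableEq α]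
    {s t : Finset α} {a : α} (hst : s ⊆ t) (hts : t ⊆ insert a s) : t = s ∨ t = insert a s := by
  by_cases ha : a ∈ t
  · exact Or.inr (hts.antisymm (Finset.insert_subset ha hst))
  · exact Or.inl ((Finset.subset_insert_iff_of_notMem ha).1 hts |>.antisymm hst)

theorem nonempty_homotopyEquiv_of_deformation {E : Type*} [TopologicalSpace E] {A B : Set E}
    (hAB : A ⊆ B) (r : ℝ → E → E) (hr : Continuous (Function.uncurry r))
    (hr0 : ∀ x, r 0 x = x) (hrB : ∀ t ∈ Set.Icc (0 : ℝ) 1, ∀ x ∈ B, r t x ∈ B)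
    (hr1 : ∀ x ∈ B, r 1 x ∈ A) (hrA : ∀ x ∈ A, r 1 x = x) : Nonempty (B ≃ₕ A) := by
  let f : C(B, A) := ⟨fun x => ⟨r 1 x, hr1 x x.2⟩, by fun_prop⟩
  let g : C(A, B) := ⟨fun x => ⟨x, hAB x.2⟩, by fun_prop⟩
  have hgf : ContinuousMap.Homotopy (ContinuousMap.id B) (g.comp f) :=
    { toFun := fun p => ⟨r p.1 p.2, hrB p.1 p.1.2 p.2 p.2.2⟩
      continuous_toFun := by fun_prop
      map_zero_left := fun x => Subtype.ext (hr0 x)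
      map_one_left := fun x => rfl }
  have hfg : f.comp g = ContinuousMap.id A := ContinuousMap.ext fun x => Subtype.ext (hrA x x.2)
  exact ⟨⟨f, g, ⟨hgf.symm⟩, hfg ▸ ContinuousMap.Homotopic.refl _⟩⟩

namespace SComplex

section Realization

variable {V : Type u}

theorem ext {K L : SComplex V} (h : K.faces = L.faces) : K = L := by
  cases K; cases L; congr

variable [Fintype V]

theorem mem_realization_iff {K : SComplex V} {x : V → ℝ} :
    x ∈ K.realization ↔
      (∀ v, 0 ≤ x v) ∧ ∑ v, x v = 1 ∧ (Function.support x).toFinset ∈ K.faces := by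
  refine ⟨fun ⟨h0, h1, F, hF, hxF⟩ => ⟨h0, h1, K.down_closed hF fun v hv => ?_⟩,
    fun ⟨h0, h1, hx⟩ => ⟨h0, h1, _, hx, fun v hv => by simpa using hv⟩⟩
  exact hxF v (by simpa using hv)

theorem mem_realization_restrict_iff {K : SComplex V} {S : Set V} {x : V → ℝ} :
    x ∈ (K.restrict S).realization ↔ x ∈ K.realization ∧ ∀ v ∉ S, x v = 0 := by
  simp only [mem_realization_iff, restrict, Set.mem_ofPred_eq, Set.mem_toFinset,
    Function.mem_support]
  constructor
  · rintro ⟨h0, h1, hK, hS⟩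
    exact ⟨⟨h0, h1, hK⟩, fun v hv => by_contra fun h => hv (hS v h)⟩
  · rintro ⟨⟨h0, h1, hK⟩, hS⟩
    exact ⟨h0, h1, hK, fun v hv => by_contra fun h => hv (hS v h)⟩

end Realization

section Collapse

variable {V : Type u} {K : SComplex V} {σ : Finset V} {w : V}

def eraseFreePair (K : SComplex V) (σ : Finset V) (w : V)
    (hfree : ∀ ρ ∈ K.faces, σ ⊆ ρ → ρ ⊆ insert w σ) : SComplex V where
  faces := K.faces \ {σ, insert w σ}
  down_closed := by
    rintro F G ⟨hF, hFσ⟩ hGF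
    refine ⟨K.down_closed hF hGF, fun hG => hFσ ?_⟩
    have hσF : σ ⊆ F := by
      rcases hG with rfl | rfl
      exacts [hGF, (Finset.subset_insert w σ).trans hGF]
    exact Finset.eq_or_eq_insert_of_subset_of_subset_insert hσF (hfree F hF hσF)

theorem subset_insert_of_maximal_card {L : SComplex V}
    (herase : ∀ ρ ∈ L.faces, ρ ∉ K.faces → ρ.erase w ∉ K.faces) (hσK : σ ∉ K.faces)
    (hwσ : w ∉ σ) (hσmax : ∀ ρ ∈ L.faces, ρ ∉ K.faces → w ∉ ρ → #ρ ≤ #σ) :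
    ∀ ρ ∈ L.faces, σ ⊆ ρ → ρ ⊆ insert w σ := by
  intro ρ hρL hσρ
  have hρK : ρ ∉ K.faces := fun h => hσK (K.down_closed h hσρ)
  have hσρ' : σ ⊆ ρ.erase w := Finset.subset_erase.2 ⟨hσρ, hwσ⟩
  have := Finset.eq_of_subset_of_card_le hσρ'
    (hσmax _ (L.down_closed hρL (ρ.erase_subset w)) (herase ρ hρL hρK) (ρ.notMem_erase w))
  exact this ▸ Finset.insert_erase_subset w ρ

theorem insert_mem_eraseFreePair (hfree : ∀ ρ ∈ K.faces, σ ⊆ ρ → ρ ⊆ insert w σ)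
    (hwσ : w ∉ σ) {ρ : Finset V} (hρ : ρ ∈ (K.eraseFreePair σ w hfree).faces)
    (hins : insert w ρ ∈ K.faces) : insert w ρ ∈ (K.eraseFreePair σ w hfree).faces := by
  refine ⟨hins, ?_⟩
  rintro (h | h)
  · exact hwσ (h ▸ ρ.mem_insert_self w)
  · refine hρ.2 (Finset.eq_or_eq_insert_of_subset_of_subset_insert (fun v hv => ?_)
      (h ▸ ρ.subset_insert w))
    rcases Finset.mem_insert.1 (h ▸ Finset.mem_insert_of_mem hv : v ∈ insert w ρ) with rfl | hv'
    exacts [absurd hv hwσ, hv']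

/-- Moves the minimal weight on `σ` off every vertex of `σ` onto `w`; at `t = 1` some vertex of
`σ` gets weight `0`, so the support no longer contains `σ`. -/
def collapseMap (σ : Finset V) (hσ : σ.Nonempty) (w : V) (t : ℝ) (x : V → ℝ) : V → ℝ :=
  fun v => x v + t * σ.inf' hσ x * ((if v = w then (#σ : ℝ) else 0) - if v ∈ σ then 1 else 0)

theorem continuous_collapseMap (hσ : σ.Nonempty) :
    Continuous (Function.uncurry (collapseMap σ hσ w)) := by
  have : Continuous fun x : V → ℝ => σ.inf' hσ x :=
    Continuous.finset_inf'_apply hσ fun v _ => continuous_apply v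
  unfold collapseMap Function.uncurry
  fun_prop

theorem collapseMap_of_inf'_eq_zero (hσ : σ.Nonempty) {x : V → ℝ} (hx : σ.inf' hσ x = 0)
    (t : ℝ) : collapseMap σ hσ w t x = x := by
  funext v
  simp [collapseMap, hx]

variable [Fintype V]

theorem mem_realization_eraseFreePair_iff
    (hfree : ∀ ρ ∈ K.faces, σ ⊆ ρ → ρ ⊆ insert w σ) {x : V → ℝ} :
    x ∈ (K.eraseFreePair σ w hfree).realization ↔ x ∈ K.realization ∧ ∃ v ∈ σ, x v = 0 := by
  simp only [mem_realization_iff]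
  constructor
  · rintro ⟨h0, h1, hK, hσ⟩
    refine ⟨⟨h0, h1, hK⟩, ?_⟩
    by_contra! hx
    have hσx : σ ⊆ (Function.support x).toFinset := fun v hv => by simpa using hx v hv
    exact hσ (Finset.eq_or_eq_insert_of_subset_of_subset_insert hσx (hfree _ hK hσx))
  · rintro ⟨⟨h0, h1, hK⟩, v, hvσ, hv⟩
    refine ⟨h0, h1, hK, fun h => ?_⟩
    have hvx : v ∉ (Function.support x).toFinset := by simpa using hv
    simp only [Set.mem_insert_iff, Set.mem_singleton_iff] at h
    rcases h with h | h <;> rw [h] at hvx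
    exacts [hvx hvσ, hvx (Finset.mem_insert_of_mem hvσ)]

theorem sum_collapseMap (hσ : σ.Nonempty) (t : ℝ) (x : V → ℝ) :
    ∑ v, collapseMap σ hσ w t x v = ∑ v, x v := by
  unfold collapseMap
  rw [Finset.sum_add_distrib, ← Finset.mul_sum, Finset.sum_sub_distrib, Finset.sum_ite_eq',
    Finset.sum_ite_mem]
  simp

theorem collapseMap_mem_realization (hσ : σ.Nonempty) (hw : w ∉ σ)
    (hτ : insert w σ ∈ K.faces) (hfree : ∀ ρ ∈ K.faces, σ ⊆ ρ → ρ ⊆ insert w σ)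
    {t : ℝ} (ht : t ∈ Set.Icc (0 : ℝ) 1) {x : V → ℝ} (hx : x ∈ K.realization) :
    collapseMap σ hσ w t x ∈ K.realization := by
  rw [mem_realization_iff] at hx ⊢
  obtain ⟨h0, h1, hK⟩ := hx
  have hm0 : 0 ≤ σ.inf' hσ x := Finset.le_inf' hσ _ fun v _ => h0 v
  by_cases hm : σ.inf' hσ x = 0
  · rw [collapseMap_of_inf'_eq_zero hσ hm]
    exact ⟨h0, h1, hK⟩
  have hσx : σ ⊆ (Function.support x).toFinset := fun v hv => by
    have := Finset.inf'_le x hv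
    simp only [Set.mem_toFinset, Function.mem_support]
    intro h; exact hm (by linarith)
  have hxτ := hfree _ hK hσx
  refine ⟨fun v => ?_, by rw [sum_collapseMap, h1], K.down_closed hτ fun v hv => ?_⟩
  · have := h0 v
    have htm : t * σ.inf' hσ x ≤ σ.inf' hσ x := by nlinarith [ht.1, ht.2]
    unfold collapseMap
    by_cases hvσ : v ∈ σ
    · have : σ.inf' hσ x ≤ x v := Finset.inf'_le x hvσ
      rw [if_neg (ne_of_mem_of_not_mem hvσ hw), if_pos hvσ]
      linarith
    · rw [if_neg hvσ]
      have : 0 ≤ t * σ.inf' hσ x * #σ := by have := ht.1; positivity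
      split_ifs <;> linarith
  · by_contra hvτ
    have hvw : v ≠ w := fun h => hvτ (h ▸ Finset.mem_insert_self w σ)
    have hvσ : v ∉ σ := fun h => hvτ (Finset.mem_insert_of_mem h)
    have hxv : x v = 0 := by simpa using mt (@hxτ v) hvτ
    have : collapseMap σ hσ w t x v = 0 := by simp [collapseMap, hvw, hvσ, hxv]
    simp [this] at hv

theorem nonempty_homotopyEquiv_eraseFreePair (hσ : σ.Nonempty) (hw : w ∉ σ)
    (hτ : insert w σ ∈ K.faces) (hfree : ∀ ρ ∈ K.faces, σ ⊆ ρ → ρ ⊆ insert w σ) :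
    Nonempty (K.realization ≃ₕ (K.eraseFreePair σ w hfree).realization) := by
  refine nonempty_homotopyEquiv_of_deformation
    (fun x hx => ((mem_realization_eraseFreePair_iff hfree).1 hx).1) (collapseMap σ hσ w)
    (continuous_collapseMap hσ) (fun x => funext fun v => by simp [collapseMap])
    (fun t ht x hx => collapseMap_mem_realization hσ hw hτ hfree ht hx) (fun x hx => ?_)
    (fun x hx => ?_)
  · refine (mem_realization_eraseFreePair_iff hfree).2
      ⟨collapseMap_mem_realization hσ hw hτ hfree ⟨zero_le_one, le_rfl⟩ hx, ?_⟩
    obtain ⟨v, hvσ, hv⟩ := Finset.exists_mem_eq_inf' hσ x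
    refine ⟨v, hvσ, ?_⟩
    simp [collapseMap, hvσ, ne_of_mem_of_not_mem hvσ hw, hv]
  · obtain ⟨hxK, v, hvσ, hv⟩ := (mem_realization_eraseFreePair_iff hfree).1 hx
    refine collapseMap_of_inf'_eq_zero hσ (le_antisymm ?_ ?_) 1
    · exact hv ▸ Finset.inf'_le x hvσ
    · exact Finset.le_inf' hσ _ fun v _ => hxK.1 v

end Collapse

/-- The faces of `L` outside `K` are matched by `σ ↦ insert w σ`; removing the matched pairs
one at a time, largest first, is a sequence of elementary collapses. -/
theorem nonempty_homotopyEquiv_of_matching {V : Type u} [Fintype V] (K L : SComplex V) (w : V)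
    (hKL : K.faces ⊆ L.faces) (hne : ∀ σ ∈ L.faces, σ ∉ K.faces → σ.Nonempty)
    (hins : ∀ σ ∈ L.faces, σ ∉ K.faces → insert w σ ∈ L.faces)
    (herase : ∀ σ ∈ L.faces, σ ∉ K.faces → σ.erase w ∉ K.faces) :
    Nonempty (L.realization ≃ₕ K.realization) := by
  induction hn : (L.faces \ K.faces).ncard using Nat.strong_induction_on generalizing L with
  | _ n ih =>
  by_cases hLK : L.faces ⊆ K.faces
  · obtain rfl := ext (hLK.antisymm hKL)
    exact ⟨ContinuousMap.HomotopyEquiv.refl _⟩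
  obtain ⟨ρ, hρL, hρK⟩ := Set.not_subset.1 hLK
  obtain ⟨σ, hσS, hσmax⟩ := Finset.exists_max_image
    (Finset.univ.filter fun σ => σ ∈ L.faces ∧ σ ∉ K.faces ∧ w ∉ σ) Finset.card
    ⟨ρ.erase w, by simpa using ⟨L.down_closed hρL (ρ.erase_subset w), herase ρ hρL hρK⟩⟩
  simp only [Finset.mem_filter, Finset.mem_univ, true_and] at hσS hσmax
  obtain ⟨hσL, hσK, hwσ⟩ := hσS
  have hfree := subset_insert_of_maximal_card herase hσK hwσ fun ρ h₁ h₂ h₃ => hσmax ρ ⟨h₁, h₂, h₃⟩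
  set L' := L.eraseFreePair σ w hfree
  have hL'L : L'.faces ⊆ L.faces := Set.sdiff_subset
  have hKL' : K.faces ⊆ L'.faces := by
    refine fun F hF => ⟨hKL hF, ?_⟩
    rintro (rfl | rfl)
    exacts [hσK hF, hσK (K.down_closed hF (σ.subset_insert w))]
  have hlt : (L'.faces \ K.faces).ncard < n := by
    refine hn ▸ Set.ncard_lt_ncard (Set.ssubset_iff_of_subset
      (Set.sdiff_subset_sdiff_left hL'L) |>.2 ⟨σ, ⟨hσL, hσK⟩, fun h => h.1.2 (Or.inl rfl)⟩)
  obtain ⟨E⟩ := ih _ hlt L' hKL' (fun σ h => hne σ (hL'L h))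
    (fun σ' h hK => insert_mem_eraseFreePair hfree hwσ h (hins σ' (hL'L h) hK))
    (fun σ h => herase σ (hL'L h)) rfl
  obtain ⟨C⟩ := nonempty_homotopyEquiv_eraseFreePair (hne σ hσL hσK) hwσ
    (hins σ hσL hσK) hfree
  exact ⟨C.trans E⟩

section Fold

variable {V : Type u}

def foldMap (a b : V) (t : ℝ) (x : V → ℝ) : V → ℝ :=
  fun v => x v + t * x b * ((if v = a then 1 else 0) - if v = b then 1 else 0)

theorem continuous_foldMap (a b : V) : Continuous (Function.uncurry (foldMap a b)) := by
  unfold foldMap Function.uncurry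
  fun_prop

theorem foldMap_of_eq_zero {a b : V} {x : V → ℝ} (hx : x b = 0) (t : ℝ) :
    foldMap a b t x = x := by
  funext v
  simp [foldMap, hx]

variable [Fintype V]

theorem foldMap_mem_realization {K : SComplex V} {a b : V} (hab : a ≠ b)
    (hK : ∀ F ∈ K.faces, b ∈ F → insert a F ∈ K.faces)
    {t : ℝ} (ht : t ∈ Set.Icc (0 : ℝ) 1) {x : V → ℝ} (hx : x ∈ K.realization) :
    foldMap a b t x ∈ K.realization := by
  by_cases hxb : x b = 0
  · rwa [foldMap_of_eq_zero hxb]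
  rw [mem_realization_iff] at hx ⊢
  obtain ⟨h0, h1, hxK⟩ := hx
  refine ⟨fun v => ?_, ?_, K.down_closed (hK _ hxK (by simpa using hxb)) fun v hv => ?_⟩
  · have := h0 v
    have := mul_nonneg ht.1 (h0 b)
    have : t * x b ≤ x b := by nlinarith [ht.2, h0 b]
    unfold foldMap
    by_cases hva : v = a
    · rw [if_pos hva, if_neg (hva ▸ hab)]
      linarith
    · rw [if_neg hva]
      split_ifs with hvb
      · subst hvb; linarith
      · linarith
  · unfold foldMap
    rw [Finset.sum_add_distrib, ← Finset.mul_sum, Finset.sum_sub_distrib, Finset.sum_ite_eq',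
      Finset.sum_ite_eq']
    simpa using h1
  · by_contra hv'
    have hva : v ≠ a := fun h => hv' (h ▸ Finset.mem_insert_self _ _)
    have hxv : x v = 0 := by simpa using mt Finset.mem_insert_of_mem hv'
    have hvb : v ≠ b := fun h => hxb (h ▸ hxv)
    have : foldMap a b t x v = 0 := by simp [foldMap, hva, hvb, hxv]
    simp [this] at hv

theorem nonempty_homotopyEquiv_restrict_compl_singleton {K : SComplex V} {a b : V}
    (hab : a ≠ b) (hK : ∀ F ∈ K.faces, b ∈ F → insert a F ∈ K.faces) :
    Nonempty (K.realization ≃ₕ (K.restrict {b}ᶜ).realization) := by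
  refine nonempty_homotopyEquiv_of_deformation
    (fun x hx => (mem_realization_restrict_iff.1 hx).1) (foldMap a b) (continuous_foldMap a b)
    (fun x => funext fun v => by simp [foldMap])
    (fun t ht x hx => foldMap_mem_realization hab hK ht hx) (fun x hx => ?_)
    (fun x hx => foldMap_of_eq_zero ((mem_realization_restrict_iff.1 hx).2 b (by simp)) 1)
  refine mem_realization_restrict_iff.2
    ⟨foldMap_mem_realization hab hK ⟨zero_le_one, le_rfl⟩ hx, fun v hv => ?_⟩
  simp only [Set.mem_compl_iff, Set.mem_singleton_iff, not_not] at hv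
  simp [foldMap, hv, hab.symm]

end Fold

section Embedding

variable {V : Type u} {W : Type v} (ι : W ↪ V)

theorem extend_zero_comp {x : V → ℝ} (hx : ∀ v ∉ Set.range ι, x v = 0) :
    Function.extend ι (x ∘ ι) 0 = x := by
  funext v
  by_cases hv : v ∈ Set.range ι
  · obtain ⟨w, rfl⟩ := hv
    simp [ι.injective.extend_apply]
  · simp [Function.extend_apply' _ _ _ hv, hx v hv]

variable [Fintype V] [Fintype W]

theorem sum_extend_zero (y : W → ℝ) : ∑ v, Function.extend ι y 0 v = ∑ w, y w := by
  rw [← Finset.sum_subset (Finset.subset_univ (Finset.univ.map ι)), Finset.sum_map]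
  · simp [ι.injective.extend_apply]
  · intro v _ hv
    exact Function.extend_apply' _ _ _ fun ⟨w, hw⟩ => hv (by simp [← hw])

theorem support_extend_zero (y : W → ℝ) :
    (Function.support (Function.extend ι y 0)).toFinset = (Function.support y).toFinset.map ι := by
  ext v
  by_cases hv : ∃ w, ι w = v
  · obtain ⟨w, rfl⟩ := hv
    simp [ι.injective.extend_apply]
  · simp only [Set.mem_toFinset, Function.mem_support, Finset.mem_map, not_exists] at hv ⊢
    simp [hv]

theorem extend_zero_mem_realization_iff {L : SComplex W} {K : SComplex V}
    (hfaces : ∀ G : Finset W, G.map ι ∈ K.faces ↔ G ∈ L.faces) {y : W → ℝ} :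
    Function.extend ι y 0 ∈ K.realization ↔ y ∈ L.realization := by
  have hnonneg : (∀ v, 0 ≤ Function.extend ι y 0 v) ↔ ∀ w, 0 ≤ y w := by
    refine ⟨fun h w => ι.injective.extend_apply y 0 w ▸ h (ι w), fun h v => ?_⟩
    by_cases hv : ∃ w, ι w = v
    · obtain ⟨w, rfl⟩ := hv
      simpa [ι.injective.extend_apply] using h w
    · simp [Function.extend_apply' _ _ _ hv]
  rw [mem_realization_iff, mem_realization_iff, hnonneg, sum_extend_zero, support_extend_zero,
    hfaces]

theorem nonempty_homeomorph_realization_of_embedding {L : SComplex W} {K : SComplex V}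
    (hK : ∀ F ∈ K.faces, ∀ v ∈ F, v ∈ Set.range ι)
    (hfaces : ∀ G : Finset W, G.map ι ∈ K.faces ↔ G ∈ L.faces) :
    Nonempty (K.realization ≃ₜ L.realization) := by
  have hrange : ∀ x ∈ K.realization, ∀ v ∉ Set.range ι, x v = 0 := by
    intro x hx v hv
    by_contra hxv
    exact hv (hK _ (mem_realization_iff.1 hx).2.2 v (by simpa using hxv))
  have hcomp : ∀ x ∈ K.realization, x ∘ ι ∈ L.realization := fun x hx => by
    rwa [← extend_zero_mem_realization_iff ι hfaces, extend_zero_comp ι (hrange x hx)]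
  refine ⟨{ toFun := fun x => ⟨x ∘ ι, hcomp x x.2⟩
            invFun := fun y => ⟨Function.extend ι y 0,
              (extend_zero_mem_realization_iff ι hfaces).2 y.2⟩
            left_inv := fun x => Subtype.ext (extend_zero_comp ι (hrange x x.2))
            right_inv := fun y => Subtype.ext (Function.extend_comp ι.injective _ _)
            continuous_toFun := ((continuous_pi fun w => continuous_apply (ι w)).comp
              continuous_subtype_val).subtype_mk _
            continuous_invFun := ?_ }⟩
  refine Continuous.subtype_mk (continuous_pi fun v => ?_) _
  by_cases hv : ∃ w, ι w = v
  · simp only [Function.extend_def, dif_pos hv]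
    exact (continuous_apply _).comp continuous_subtype_val
  · simp only [Function.extend_def, dif_neg hv]
    exact continuous_const

end Embedding

theorem map_optionElim_mem_faces_iff {V : Type u} {W : Type v} [DecidableEq W]
    {L : SComplex (Option W)} {K : SComplex V}
    (j : W ↪ V) {a : V} (ha : a ∉ Set.range j)
    (h₀ : ∀ G : Finset W, G.map Function.Embedding.some ∈ L.faces ↔ G.map j ∈ K.faces)
    (h₁ : ∀ G : Finset W,
      insert none (G.map Function.Embedding.some) ∈ L.faces ↔ insert a (G.map j) ∈ K.faces)
    (G : Finset (Option W)) : G.map (j.optionElim a ha) ∈ K.faces ↔ G ∈ L.faces := by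
  have hmap : (G.eraseNone.map Function.Embedding.some).map (j.optionElim a ha) =
      G.eraseNone.map j := by
    rw [Finset.map_map]; rfl
  by_cases hG : none ∈ G
  · rw [← Finset.insert_erase hG, ← Finset.map_some_eraseNone, Finset.map_insert, hmap, h₁]
    rfl
  · rw [← Finset.erase_eq_of_notMem hG, ← Finset.map_some_eraseNone, hmap, h₀]

section UnionConeStar

variable {V : Type u} {X : SComplex V} {a b : V} {H : Finset V}

/-- `X ∪ (a ∗ st_X b)`, the cone with apex `a` over the closed star of `b` glued to `X`. -/
def unionConeStar (X : SComplex V) (a b : V) : SComplex V where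
  faces := {H | H ∈ X.faces ∨ insert b (H.erase a) ∈ X.faces}
  down_closed := by
    rintro F G (h | h) hGF
    · exact Or.inl (X.down_closed h hGF)
    · exact Or.inr (X.down_closed h
        (Finset.insert_subset_insert _ (Finset.erase_subset_erase _ hGF)))

theorem faces_subset_unionConeStar : X.faces ⊆ (X.unionConeStar a b).faces :=
  fun _ => Or.inl

theorem mem_of_mem_unionConeStar (hH : H ∈ (X.unionConeStar a b).faces) (ha : a ∉ H) :
    H ∈ X.faces := by
  rcases hH with h | h
  · exact h
  · rw [Finset.erase_eq_of_notMem ha] at h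
    exact X.down_closed h (H.subset_insert b)

theorem insert_mem_unionConeStar (hab : a ≠ b) (hH : H ∈ (X.unionConeStar a b).faces)
    (hb : b ∈ H) : insert a H ∈ (X.unionConeStar a b).faces := by
  refine Or.inr ?_
  rw [Finset.erase_insert_eq_erase]
  rcases hH with h | h
  · rw [Finset.insert_eq_self.2 (Finset.mem_erase.2 ⟨hab.symm, hb⟩)]
    exact X.down_closed h (H.erase_subset a)
  · exact h

theorem insert_mem_unionConeStar_of_notMem (hab : a ≠ b)
    (hH : H ∈ (X.unionConeStar a b).faces) (hHX : H ∉ X.faces) :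
    insert b H ∈ (X.unionConeStar a b).faces := by
  refine Or.inr ?_
  rw [Finset.erase_insert_of_ne hab.symm, Finset.insert_idem]
  exact hH.resolve_left hHX

theorem erase_notMem_of_mem_unionConeStar (hab : a ≠ b)
    (hX : ∀ G : Finset V, a ∉ G → b ∉ G →
      insert a G ∈ X.faces → insert b G ∈ X.faces → insert a (insert b G) ∈ X.faces)
    (hH : H ∈ (X.unionConeStar a b).faces) (hHX : H ∉ X.faces) : H.erase b ∉ X.faces := by
  intro hHb
  have ha : a ∈ H := by_contra fun ha => hHX (mem_of_mem_unionConeStar hH ha)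
  set G := (H.erase a).erase b
  have haG : insert a G = H.erase b := by
    rw [show G = (H.erase b).erase a from Finset.erase_right_comm,
      Finset.insert_erase (Finset.mem_erase.2 ⟨hab, ha⟩)]
  have hbG : insert b G ⊆ insert b (H.erase a) :=
    Finset.insert_subset_insert b (Finset.erase_subset b _)
  have hHG : H ⊆ insert a (insert b G) := (Finset.insert_erase_subset a H).trans
    (Finset.insert_subset_insert a (Finset.insert_erase_subset b _))
  exact hHX (X.down_closed (hX G (by simp [G]) (by simp [G]) (haG ▸ hHb)
    (X.down_closed (hH.resolve_left hHX) hbG)) hHG)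

theorem mem_restrict_unionConeStar_iff (ha : a ∉ H) (hb : b ∉ H) :
    H ∈ ((X.unionConeStar a b).restrict {b}ᶜ).faces ↔ H ∈ X.faces :=
  ⟨fun h => mem_of_mem_unionConeStar h.1 ha,
    fun h => ⟨Or.inl h, fun v hv => by rintro rfl; exact hb hv⟩⟩

theorem insert_mem_restrict_unionConeStar_iff (hab : a ≠ b) (ha : a ∉ H) (hb : b ∉ H) :
    insert a H ∈ ((X.unionConeStar a b).restrict {b}ᶜ).faces ↔
      insert a H ∈ X.faces ∨ insert b H ∈ X.faces := by
  have hb' : b ∉ insert a H := by simp [hab.symm, hb]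
  change (_ ∨ _) ∧ _ ↔ _
  rw [Finset.erase_insert ha]
  exact ⟨And.left, fun h => ⟨h, fun v hv => by rintro rfl; exact hb' hv⟩⟩

end UnionConeStar

end SComplex

/-- Let `X` be a simplicial complex on `V` and `a₁ ≠ a₂`
vertices such that whenever `{a₁} ∪ G` and `{a₂} ∪ G` are faces (with
`G ⊆ V \ {a₁,a₂}`), so is `{a₁,a₂} ∪ G`.  Let `Y` be the complex on
`V₀ ∪ {a}` (`V₀ = V \ {a₁,a₂}`, `a` a new vertex, modeled by `none` in an
`Option` type) with `Y|_{V₀} = X|_{V₀}`, and `G ∪ {a} ∈ Y` iff `G ∪ {a₁} ∈ X`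
or `G ∪ {a₂} ∈ X`.  Then `X` and `Y` are homotopy equivalent. -/
theorem statement_0 {V : Type u} [Fintype V] (X : SComplex V) (a₁ a₂ : V)
    (hne : a₁ ≠ a₂)
    (hX : ∀ G : Finset V, a₁ ∉ G → a₂ ∉ G →
      insert a₁ G ∈ X.faces → insert a₂ G ∈ X.faces →
      insert a₁ (insert a₂ G) ∈ X.faces)
    (Y : SComplex (Option {v : V // v ≠ a₁ ∧ v ≠ a₂}))
    (hY₀ : ∀ G : Finset {v : V // v ≠ a₁ ∧ v ≠ a₂},
      G.map ⟨some, Option.some_injective _⟩ ∈ Y.faces ↔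
      G.map (Function.Embedding.subtype _) ∈ X.faces)
    (hY₁ : ∀ G : Finset {v : V // v ≠ a₁ ∧ v ≠ a₂},
      insert none (G.map ⟨some, Option.some_injective _⟩) ∈ Y.faces ↔
      (insert a₁ (G.map (Function.Embedding.subtype _)) ∈ X.faces ∨
       insert a₂ (G.map (Function.Embedding.subtype _)) ∈ X.faces)) :
    SComplex.HEquiv X Y := by
  set X' := X.unionConeStar a₁ a₂
  obtain ⟨E₁⟩ := SComplex.nonempty_homotopyEquiv_of_matching X X' a₂
    SComplex.faces_subset_unionConeStar
    (fun σ hσ hσX => ⟨a₁, by_contra fun ha => hσX (SComplex.mem_of_mem_unionConeStar hσ ha)⟩)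
    (fun σ => SComplex.insert_mem_unionConeStar_of_notMem hne)
    (fun σ => SComplex.erase_notMem_of_mem_unionConeStar hne hX)
  obtain ⟨E₂⟩ := SComplex.nonempty_homotopyEquiv_restrict_compl_singleton hne
    (fun F => SComplex.insert_mem_unionConeStar (X := X) hne)
  let ι := (Function.Embedding.subtype fun v : V => v ≠ a₁ ∧ v ≠ a₂).optionElim a₁ (by simp)
  have hrange : ∀ F ∈ (X'.restrict {a₂}ᶜ).faces, ∀ v ∈ F, v ∈ Set.range ι := by
    intro F hF v hv
    by_cases hv₁ : v = a₁
    · exact ⟨none, hv₁.symm⟩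
    · exact ⟨some ⟨v, hv₁, hF.2 v hv⟩, rfl⟩
  obtain ⟨E₃⟩ := SComplex.nonempty_homeomorph_realization_of_embedding ι hrange
    (SComplex.map_optionElim_mem_faces_iff _ _
      (fun G => (hY₀ G).trans (SComplex.mem_restrict_unionConeStar_iff (by simp) (by simp)).symm)
      (fun G => (hY₁ G).trans (SComplex.insert_mem_restrict_unionConeStar_iff hne (by simp)
        (by simp)).symm))
  exact ⟨E₁.symm.trans (E₂.trans E₃.toHomotopyEquiv)⟩
end
end

section
/- Let G be a bipartite graph with vertex set A ⊔ B and all edges between A and B, and let X be the simplicial complex on A ⊔ B whose Stanley–Reisner ideal is the edge ideal of G. Suppose a, a′ ∈ A are such that the set of neighbours of a′ in B contains the set of neighbours of a in B. Let Y be the induced subcomplex of X on (A \ {a′}) ∪ B. Then X and Y are homotopy equivalent. -/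
/-!
Common infrastructure: abstract simplicial complexes, geometric realization,
homotopy equivalence, reduced simplicial cohomology, squarefree monomial ideals
(encoded as upward closed families of finite sets), Koszul-complex multigraded
Betti numbers, and letterplace ideals of posets.
-/

noncomputable section

open Finset

attribute [local instance] Classical.propDecidable

universe u v w

/-- `A` is a maximal antichain of the poset `P`. -/
def IsMaxAntichainFinset {P : Type u} [PartialOrder P] (A : Finset P) : Prop :=
  IsAntichain (· ≤ ·) (A : Set P) ∧
    ∀ B : Finset P, IsAntichain (· ≤ ·) (B : Set P) → A ⊆ B → A = B

/-!
Pushing all the weight of `a'` onto `a` retracts the realization of `X` onto that of `Y`.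
Every face containing `a'` stays a face when `a` is added, so a point and its image lie in a
common simplex of `X`, and the straight-line homotopy between them stays inside `X`.
-/

section StraightLine

variable {X E : Type*} [TopologicalSpace X] [AddCommGroup E] [TopologicalSpace E]
  [IsTopologicalAddGroup E] [Module ℝ E] [ContinuousSMul ℝ E]

theorem ContinuousMap.Homotopic.of_segment_subset {S : Set E} {f g : C(X, S)}
    (h : ∀ x, segment ℝ (f x : E) (g x) ⊆ S) : f.Homotopic g :=
  ⟨{ toFun := fun p => ⟨AffineMap.lineMap (f p.2 : E) (g p.2) (p.1 : ℝ),
        h p.2 (lineMap_mem_segment ℝ _ _ p.1.2)⟩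
     continuous_toFun := by
       refine Continuous.subtype_mk ?_ _
       simp only [AffineMap.lineMap_apply_module]
       fun_prop
     map_zero_left := fun x => by simp
     map_one_left := fun x => by simp }⟩

end StraightLine

namespace SComplex

variable {V : Type u} {X Y : SComplex V}

/-- Domination in the sense of strong homotopy theory: the link of `w` is a cone with apex `v`. -/
def Dominates (X : SComplex V) (v w : V) : Prop :=
  ∀ F ∈ X.faces, w ∈ F → ∃ G ∈ X.faces, v ∈ G ∧ F ⊆ G

def foldVertex (v w : V) (f : V → ℝ) : V → ℝ :=
  f + Pi.single v (f w) - Pi.single w (f w)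

section FoldVertex

variable {v w : V} {f : V → ℝ}

theorem foldVertex_apply_right (hvw : v ≠ w) : foldVertex v w f w = 0 := by
  simp [foldVertex, hvw.symm]

theorem foldVertex_apply_of_ne {x : V} (hxv : x ≠ v) (hxw : x ≠ w) :
    foldVertex v w f x = f x := by
  simp [foldVertex, hxv, hxw]

theorem foldVertex_of_apply_eq_zero (h : f w = 0) : foldVertex v w f = f := by
  simp [foldVertex, h]

theorem foldVertex_ne_zero {x : V} (hvw : v ≠ w) (hx : foldVertex v w f x ≠ 0) :
    x ≠ w ∧ (x = v ∨ f x ≠ 0) := by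
  have hxw : x ≠ w := by
    rintro rfl
    exact hx (foldVertex_apply_right hvw)
  refine ⟨hxw, or_iff_not_imp_left.2 fun hxv => ?_⟩
  rwa [foldVertex_apply_of_ne hxv hxw] at hx

theorem continuous_foldVertex : Continuous (foldVertex (V := V) v w) := by
  have hsingle (x : V) : Continuous fun f : V → ℝ => Pi.single (M := fun _ => ℝ) x (f w) :=
    (continuous_single x).comp (continuous_apply w)
  exact (continuous_id.add (hsingle v)).sub (hsingle w)

theorem foldVertex_mem_stdSimplex [Fintype V] (hvw : v ≠ w) (hf : f ∈ stdSimplex ℝ V) :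
    foldVertex v w f ∈ stdSimplex ℝ V := by
  refine ⟨fun x => ?_, ?_⟩
  · by_cases hxw : x = w
    · rw [hxw, foldVertex_apply_right hvw]
    · by_cases hxv : x = v
      · simpa [foldVertex, hxv, hvw] using add_nonneg (hf.1 v) (hf.1 w)
      · exact foldVertex_apply_of_ne hxv hxw ▸ hf.1 x
  · simp [foldVertex, Finset.sum_sub_distrib, Finset.sum_add_distrib, hf.2]

end FoldVertex

theorem restrict_faces_subset (S : Set V) : (X.restrict S).faces ⊆ X.faces :=
  fun _ hF => hF.1

theorem Dominates.exists_face_foldVertex {v w : V} {f : V → ℝ} (hvw : v ≠ w)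
    (h : X.Dominates v w) (hf : ∃ F ∈ X.faces, ∀ x, f x ≠ 0 → x ∈ F) :
    ∃ G ∈ X.faces, (∀ x, f x ≠ 0 → x ∈ G) ∧ ∀ x, foldVertex v w f x ≠ 0 → x ∈ G := by
  obtain ⟨F, hF, hfF⟩ := hf
  by_cases hfw : f w = 0
  · exact ⟨F, hF, hfF, by rwa [foldVertex_of_apply_eq_zero hfw]⟩
  obtain ⟨G, hG, hvG, hFG⟩ := h F hF (hfF w hfw)
  refine ⟨G, hG, fun x hx => hFG (hfF x hx), fun x hx => ?_⟩
  rcases (foldVertex_ne_zero hvw hx).2 with rfl | hx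
  · exact hvG
  · exact hFG (hfF x hx)

theorem convex_supportedOn (F : Finset V) : Convex ℝ {f : V → ℝ | ∀ x, f x ≠ 0 → x ∈ F} := by
  intro f hf g hg a b _ _ _ x hx
  by_contra hxF
  have hf0 : f x = 0 := by_contra fun h => hxF (hf x h)
  have hg0 : g x = 0 := by_contra fun h => hxF (hg x h)
  simp [hf0, hg0] at hx

variable [Fintype V]

theorem mem_realization_iff_s1 {f : V → ℝ} :
    f ∈ X.realization ↔ f ∈ stdSimplex ℝ V ∧ ∃ F ∈ X.faces, ∀ x, f x ≠ 0 → x ∈ F :=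
  and_assoc.symm

theorem realization_mono (h : X.faces ⊆ Y.faces) : X.realization ⊆ Y.realization :=
  fun _ ⟨hpos, hsum, F, hF, hsupp⟩ => ⟨hpos, hsum, F, h hF, hsupp⟩

theorem segment_subset_realization {f g : V → ℝ} (hf : f ∈ stdSimplex ℝ V)
    (hg : g ∈ stdSimplex ℝ V) {F : Finset V} (hF : F ∈ X.faces)
    (hfF : ∀ x, f x ≠ 0 → x ∈ F) (hgF : ∀ x, g x ≠ 0 → x ∈ F) :
    segment ℝ f g ⊆ X.realization := fun _ hh =>
  have hmem := ((convex_stdSimplex ℝ V).inter (convex_supportedOn F)).segment_subset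
    ⟨hf, hfF⟩ ⟨hg, hgF⟩ hh
  mem_realization_iff_s1.2 ⟨hmem.1, F, hF, hmem.2⟩

namespace Dominates

variable {v w : V} {f : V → ℝ}

theorem foldVertex_mem_realization_restrict (hvw : v ≠ w) (h : X.Dominates v w)
    (hf : f ∈ X.realization) :
    foldVertex v w f ∈ (X.restrict {x | x ≠ w}).realization := by
  obtain ⟨hsimplex, hface⟩ := mem_realization_iff_s1.1 hf
  obtain ⟨G, hG, -, hfoldG⟩ := h.exists_face_foldVertex hvw hface
  refine mem_realization_iff_s1.2 ⟨foldVertex_mem_stdSimplex hvw hsimplex, G.erase w,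
    ⟨X.down_closed hG (erase_subset w G), fun x hx => ne_of_mem_erase hx⟩, fun x hx => ?_⟩
  exact mem_erase.2 ⟨(foldVertex_ne_zero hvw hx).1, hfoldG x hx⟩

theorem segment_foldVertex_subset (hvw : v ≠ w) (h : X.Dominates v w)
    (hf : f ∈ X.realization) : segment ℝ (foldVertex v w f) f ⊆ X.realization := by
  obtain ⟨hsimplex, hface⟩ := mem_realization_iff_s1.1 hf
  obtain ⟨G, hG, hfG, hfoldG⟩ := h.exists_face_foldVertex hvw hface
  exact segment_subset_realization (foldVertex_mem_stdSimplex hvw hsimplex) hsimplex hG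
    hfoldG hfG

end Dominates

theorem foldVertex_eq_self_of_mem_realization_restrict {v w : V} {f : V → ℝ}
    (hf : f ∈ (X.restrict {x | x ≠ w}).realization) : foldVertex v w f = f := by
  obtain ⟨-, -, F, hF, hfF⟩ := hf
  exact foldVertex_of_apply_eq_zero (not_not.1 fun hw => hF.2 w (hfF w hw) rfl)

theorem hEquiv_restrict_ne_of_dominates {v w : V} (hvw : v ≠ w) (h : X.Dominates v w) :
    X.HEquiv (X.restrict {x | x ≠ w}) := by
  let retraction : C(X.realization, (X.restrict {x | x ≠ w}).realization) :=
    ⟨fun f => ⟨foldVertex v w f, h.foldVertex_mem_realization_restrict hvw f.2⟩,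
      (continuous_foldVertex.comp continuous_subtype_val).subtype_mk _⟩
  let inclusion : C((X.restrict {x | x ≠ w}).realization, X.realization) :=
    ⟨Set.inclusion (realization_mono (restrict_faces_subset _)), continuous_inclusion _⟩
  refine ⟨⟨retraction, inclusion, ?_, ?_⟩⟩
  · exact .of_segment_subset fun f => h.segment_foldVertex_subset hvw f.2
  · convert ContinuousMap.Homotopic.refl _
    ext f : 2
    exact (foldVertex_eq_self_of_mem_realization_restrict f.2).symm

end SComplex

theorem bipIndep_dominates {A : Type u} {B : Type v} (E : A → B → Prop) {a a' : A}
    (hN : ∀ b : B, E a b → E a' b) : (bipIndep E).Dominates (Sum.inl a) (Sum.inl a') := by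
  intro F hF ha'
  refine ⟨insert (Sum.inl a) F, fun a₁ b ha₁ hb hE => ?_, mem_insert_self _ _, subset_insert _ _⟩
  have hbF : Sum.inr b ∈ F := (mem_insert.1 hb).resolve_left Sum.inr_ne_inl
  rcases mem_insert.1 ha₁ with h | ha₁
  · cases Sum.inl_injective h
    exact hF a' b ha' hbF (hN b hE)
  · exact hF a₁ b ha₁ hbF hE

/-- Let `X` be the independence complex of a bipartite graph
with parts `A`, `B` and edge relation `E`, and let `a, a'` be distinct
vertices of `A` such that the neighbourhood of `a'` contains that of `a`.
Then `X` is homotopy equivalent to the induced subcomplex of `X` on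
`(A \ {a'}) ∪ B`. -/
theorem statement_1 {A B : Type u} [Fintype A] [Fintype B] (E : A → B → Prop)
    (a a' : A) (hne : a ≠ a') (hN : ∀ b : B, E a b → E a' b) :
    SComplex.HEquiv (bipIndep E)
      ((bipIndep E).restrict {x : A ⊕ B | x ≠ Sum.inl a'}) :=
  (bipIndep E).hEquiv_restrict_ne_of_dominates (Sum.inl_injective.ne hne)
    (bipIndep_dominates E hN)

end
end
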